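/- arXiv:2511.10144 — 3 statements merged into one kernel-verified Lean document; each statement's English description precedes it below -/
import Mathlib

section
/- For all d ≥ 1 and n ≥ d+1, the maximum diameter H_s(n,d) of a d-dimensional simplicial complex on n vertices with connected dual graph satisfies H_s(n,d) ≤ ⌊(1/d)·C(n,d) − (d+1)/d⌋. -/
/-!
Along a shortest path `σ₀, σ₁, …, σ_ℓ` in the dual graph, two facets `σⱼ, σᵢ` with `j + 1 < i`
are distinct and non-adjacent, so they share fewer than `d` vertices and hence no `d`-face.
Consequently the `d`-faces of `σᵢ` already seen among `σ₀, …, σᵢ₋₁` all lie in `σᵢ₋₁ ∩ σᵢ`,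
which is a single `d`-set: `σ₀` contributes `d + 1` distinct `d`-sets and every later facet at
least `d` new ones, giving `d + 1 + ℓ d ≤ C(n, d)`.
-/

open SimpleGraph Finset

def dualGraph (n d : ℕ) (F : Finset (Finset (Fin n))) :
    SimpleGraph {s : Finset (Fin n) // s ∈ F ∧ s.card = d + 1} :=
  SimpleGraph.fromRel (fun s t => (s.val ∩ t.val).card = d)

namespace SimpleGraph.Walk

variable {V : Type*} {G : SimpleGraph V} {u v : V}

lemma getVert_ne_of_length_eq_dist (p : G.Walk u v) (hp : p.length = G.dist u v) {i j : ℕ}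
    (hji : j < i) (hi : i ≤ p.length) : p.getVert j ≠ p.getVert i := by
  intro h
  have := G.dist_le ((p.take j).append ((p.drop i).copy h.symm rfl))
  simp only [length_append, length_copy, take_length, drop_length] at this
  omega

lemma not_adj_getVert_of_length_eq_dist (p : G.Walk u v) (hp : p.length = G.dist u v) {i j : ℕ}
    (hji : j + 1 < i) (hi : i ≤ p.length) : ¬G.Adj (p.getVert j) (p.getVert i) := by
  intro h
  have := G.dist_le ((p.take j).append (cons h (p.drop i)))
  simp only [length_append, length_cons, take_length, drop_length] at this
  omega

end SimpleGraph.Walk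

section PowersetCard

variable {α : Type*} {d : ℕ}

lemma card_powersetCard_le_one_of_card_le {r : Finset α} (h : #r ≤ d) :
    #(powersetCard d r) ≤ 1 := by
  rw [card_powersetCard]
  rcases h.lt_or_eq with hlt | rfl
  · simp [Nat.choose_eq_zero_of_lt hlt]
  · simp

theorem le_card_biUnion_powersetCard [DecidableEq α] {s : ℕ → Finset α} (ℓ : ℕ)
    (hcard : ∀ i ≤ ℓ, #(s i) = d + 1)
    (hnext : ∀ i < ℓ, #(s i ∩ s (i + 1)) ≤ d)
    (hfar : ∀ i ≤ ℓ, ∀ j, j + 1 < i → #(s j ∩ s i) < d) :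
    d + 1 + ℓ * d ≤ #((range (ℓ + 1)).biUnion fun i ↦ powersetCard d (s i)) := by
  induction ℓ with
  | zero => simp [hcard 0 le_rfl]
  | succ m ih =>
    set T := (range (m + 1)).biUnion fun i ↦ powersetCard d (s i)
    have hT : d + 1 + m * d ≤ #T :=
      ih (fun i hi ↦ hcard i (by omega)) (fun i hi ↦ hnext i (by omega))
        (fun i hi ↦ hfar i (by omega))
    have hseen : powersetCard d (s (m + 1)) ∩ T ⊆ powersetCard d (s m ∩ s (m + 1)) := by
      intro t ht
      obtain ⟨hnew, hold⟩ := mem_inter.mp ht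
      obtain ⟨htsub, htcard⟩ := mem_powersetCard.mp hnew
      obtain ⟨j, hj, htj⟩ := mem_biUnion.mp hold
      have hjsub : t ⊆ s j ∩ s (m + 1) := subset_inter (mem_powersetCard.mp htj).1 htsub
      have hjm : j = m := by
        have := mem_range.mp hj
        have := card_le_card hjsub
        have := hfar (m + 1) le_rfl j
        omega
      subst hjm
      exact mem_powersetCard.mpr ⟨hjsub, htcard⟩
    have hnew : d ≤ #(powersetCard d (s (m + 1)) \ T) := by
      have hone := (card_le_card hseen).trans
        (card_powersetCard_le_one_of_card_le (hnext m (by omega)))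
      have := card_sdiff_add_card_inter (powersetCard d (s (m + 1))) T
      rw [card_powersetCard, hcard (m + 1) le_rfl, Nat.choose_succ_self_right] at this
      omega
    have hsplit : #((range (m + 1 + 1)).biUnion fun i ↦ powersetCard d (s i)) =
        #(powersetCard d (s (m + 1)) \ T) + #T := by
      rw [range_add_one, biUnion_insert, card_sdiff_add_card]
    rw [hsplit, add_one_mul]
    omega

end PowersetCard

namespace dualGraph

variable {n d : ℕ} {F : Finset (Finset (Fin n))}

lemma adj_iff {s t : {s : Finset (Fin n) // s ∈ F ∧ s.card = d + 1}} :
    (dualGraph n d F).Adj s t ↔ s ≠ t ∧ #(s.val ∩ t.val) = d := by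
  rw [dualGraph, fromRel_adj, inter_comm t.val, or_self]

lemma card_inter_lt_of_ne_of_not_adj {s t : {s : Finset (Fin n) // s ∈ F ∧ s.card = d + 1}}
    (hne : s ≠ t) (hadj : ¬(dualGraph n d F).Adj s t) : #(s.val ∩ t.val) < d := by
  have hcard_ne : #(s.val ∩ t.val) ≠ d := fun h ↦ hadj (adj_iff.mpr ⟨hne, h⟩)
  have hcard_ne_succ : #(s.val ∩ t.val) ≠ d + 1 := fun h ↦ hne <| Subtype.ext <|
    (eq_of_subset_of_card_le inter_subset_left (by rw [h, s.2.2])).symm.trans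
      (eq_of_subset_of_card_le inter_subset_right (by rw [h, t.2.2]))
  have : #(s.val ∩ t.val) ≤ d + 1 := (card_le_card inter_subset_left).trans_eq s.2.2
  omega

theorem add_one_add_dist_mul_le_choose {u v : {s : Finset (Fin n) // s ∈ F ∧ s.card = d + 1}}
    (huv : (dualGraph n d F).Reachable u v) :
    d + 1 + (dualGraph n d F).dist u v * d ≤ n.choose d := by
  obtain ⟨p, hp⟩ := huv.exists_walk_length_eq_dist
  have hcovered : ((range (p.length + 1)).biUnion fun i ↦ powersetCard d (p.getVert i).val) ⊆
      powersetCard d univ :=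
    biUnion_subset.mpr fun i _ ↦ powersetCard_mono (subset_univ _)
  calc d + 1 + (dualGraph n d F).dist u v * d
      ≤ #((range (p.length + 1)).biUnion fun i ↦ powersetCard d (p.getVert i).val) := by
        rw [← hp]
        refine le_card_biUnion_powersetCard p.length (fun i _ ↦ (p.getVert i).2.2)
          (fun i hi ↦ (adj_iff.mp (p.adj_getVert_succ hi)).2.le) fun i hi j hji ↦ ?_
        exact card_inter_lt_of_ne_of_not_adj
          (p.getVert_ne_of_length_eq_dist hp (by omega) hi)
          (p.not_adj_getVert_of_length_eq_dist hp hji hi)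
    _ ≤ #(powersetCard d (univ : Finset (Fin n))) := card_le_card hcovered
    _ = n.choose d := by rw [card_powersetCard, card_univ, Fintype.card_fin]

end dualGraph

theorem diameter_upper_bound_general (n d : ℕ) (hd : 1 ≤ d)
    (F : Finset (Finset (Fin n))) :
    ∀ u v, (dualGraph n d F).dist u v ≤ (n.choose d - (d + 1)) / d := by
  intro u v
  by_cases huv : (dualGraph n d F).Reachable u v
  · have := dualGraph.add_one_add_dist_mul_le_choose huv
    rw [Nat.le_div_iff_mul_le (by omega)]
    omega
  · simp [dist_eq_zero_of_not_reachable huv]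

/-- For `d ≥ 1` and `n ≥ d+1`, every simplicial `d`-complex on `n` vertices with
connected dual graph has diameter at most `⌊(1/d)·C(n,d) − (d+1)/d⌋`, i.e. the
distance between any two vertices of the dual graph is at most
`(C(n,d) − (d+1)) / d` (floor division). -/
theorem diameter_upper_bound (n d : ℕ) (hd : 1 ≤ d) (hn : d + 1 ≤ n)
    (F : Finset (Finset (Fin n)))
    (hdown : ∀ s ∈ F, ∀ t ⊆ s, t ∈ F)
    (hdim : ∀ s ∈ F, s.card ≤ d + 1)
    (hmax : ∃ s ∈ F, s.card = d + 1)
    (hconn : (dualGraph n d F).Connected) :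
    ∀ u v, (dualGraph n d F).dist u v ≤ (n.choose d - (d + 1)) / d :=
  diameter_upper_bound_general n d hd F
end

section
/- On a shortest path in the dual graph of a simplicial d-complex, every vertex after the first contains at least d sets of size d that are not contained in any earlier vertex of the path. -/
open SimpleGraph Finset

namespace SimpleGraph.Walk

variable {V : Type*} {G : SimpleGraph V} {u v : V} {p : G.Walk u v}

/-- Replacing the segment of a shortest walk between its `j`-th and `k`-th vertices by `q`
cannot make it shorter. -/
lemma le_add_length_of_length_eq_dist (hp : p.length = G.dist u v) {j k : ℕ}
    (hk : k ≤ p.length) (q : G.Walk (p.getVert j) (p.getVert k)) : k ≤ j + q.length := by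
  have h := G.dist_le ((p.take j).append (q.append (p.drop k)))
  simp only [length_append, take_length, drop_length] at h
  omega

lemma le_of_getVert_eq_of_length_eq_dist (hp : p.length = G.dist u v) {j k : ℕ}
    (hk : k ≤ p.length) (h : p.getVert j = p.getVert k) : k ≤ j := by
  simpa using le_add_length_of_length_eq_dist hp hk (Walk.nil.copy rfl h)

lemma le_succ_of_adj_getVert_of_length_eq_dist (hp : p.length = G.dist u v) {j k : ℕ}
    (hk : k ≤ p.length) (h : G.Adj (p.getVert j) (p.getVert k)) : k ≤ j + 1 := by
  simpa using le_add_length_of_length_eq_dist hp hk h.toWalk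

end SimpleGraph.Walk

lemma Finset.eq_of_card_eq_of_card_le_card_inter {α : Type*} [DecidableEq α] {s t : Finset α}
    (hst : s.card = t.card) (h : s.card ≤ (s ∩ t).card) : s = t := by
  have hs : s ∩ t = s := eq_of_subset_of_card_le inter_subset_left h
  exact eq_of_subset_of_card_le (inter_eq_left.mp hs) hst.ge

section dualGraph

variable {n d : ℕ} {F : Finset (Finset (Fin n))}

lemma dualGraph_adj_iff {s t : {s : Finset (Fin n) // s ∈ F ∧ s.card = d + 1}} :
    (dualGraph n d F).Adj s t ↔ s ≠ t ∧ (s.val ∩ t.val).card = d := by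
  rw [dualGraph, fromRel_adj, inter_comm t.val, or_self]

lemma dualGraph_adj_of_ne_of_le_card_inter
    {s t : {s : Finset (Fin n) // s ∈ F ∧ s.card = d + 1}} (hne : s ≠ t)
    (h : d ≤ (s.val ∩ t.val).card) : (dualGraph n d F).Adj s t := by
  refine dualGraph_adj_iff.mpr ⟨hne, le_antisymm ?_ h⟩
  by_contra! hlt
  have hcard : s.val.card = t.val.card := s.2.2.trans t.2.2.symm
  exact hne (Subtype.ext (eq_of_card_eq_of_card_le_card_inter hcard (by omega)))

lemma eq_getVert_pred_inter_of_subset_getVert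
    {u v : {s : Finset (Fin n) // s ∈ F ∧ s.card = d + 1}} {w : (dualGraph n d F).Walk u v}
    (hw : w.length = (dualGraph n d F).dist u v)
    {i j : ℕ} (hi : i ≤ w.length) (hji : j < i) {t : Finset (Fin n)} (ht : t.card = d)
    (hti : t ⊆ (w.getVert i).val) (htj : t ⊆ (w.getVert j).val) :
    t = (w.getVert (i - 1)).val ∩ (w.getVert i).val := by
  have hne : w.getVert j ≠ w.getVert i := fun h ↦
    absurd (w.le_of_getVert_eq_of_length_eq_dist hw hi h) (by omega)
  have hadj : (dualGraph n d F).Adj (w.getVert j) (w.getVert i) :=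
    dualGraph_adj_of_ne_of_le_card_inter hne (ht.ge.trans (card_le_card (subset_inter htj hti)))
  obtain rfl : j = i - 1 := by
    have := w.le_succ_of_adj_getVert_of_length_eq_dist hw hi hadj
    omega
  have hridge := (dualGraph_adj_iff.mp hadj).2
  exact eq_of_subset_of_card_le (subset_inter htj hti) (hridge.trans ht.symm).le

end dualGraph

theorem shortest_path_new_ridges_general (n d : ℕ) (F : Finset (Finset (Fin n)))
    {u v : {s : Finset (Fin n) // s ∈ F ∧ s.card = d + 1}}
    (w : (dualGraph n d F).Walk u v)
    (hshort : w.length = (dualGraph n d F).dist u v) :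
    ∀ i, 1 ≤ i → i ≤ w.length →
      d ≤ {t : Finset (Fin n) | t.card = d ∧ t ⊆ (w.getVert i).val ∧
            ∀ j < i, ¬ t ⊆ (w.getVert j).val}.ncard := by
  intro i _ hi
  set s := (w.getVert i).val
  set ridge := (w.getVert (i - 1)).val ∩ s
  have hnew : (((s.powersetCard d).erase ridge : Finset _) : Set (Finset (Fin n))) ⊆
      {t | t.card = d ∧ t ⊆ s ∧ ∀ j < i, ¬ t ⊆ (w.getVert j).val} := by
    intro t ht
    simp only [coe_erase, Set.mem_sdiff, mem_coe, mem_powersetCard, Set.mem_singleton_iff] at ht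
    obtain ⟨⟨hts, htd⟩, hne⟩ := ht
    exact ⟨htd, hts, fun j hj htj ↦
      hne (eq_getVert_pred_inter_of_subset_getVert hshort hi hj htd hts htj)⟩
  calc d = (s.powersetCard d).card - 1 := by
        rw [card_powersetCard, (w.getVert i).2.2, Nat.choose_succ_self_right]; rfl
    _ ≤ ((s.powersetCard d).erase ridge).card := pred_card_le_card_erase
    _ = (((s.powersetCard d).erase ridge : Finset _) : Set (Finset (Fin n))).ncard :=
        (Set.ncard_coe_finset _).symm
    _ ≤ _ := Set.ncard_le_ncard hnew (Set.toFinite _)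

/-- On a shortest path in the dual graph of a simplicial `d`-complex, every
vertex after the first contains at least `d` sets of size `d` that are not
contained in any earlier vertex of the path. -/
theorem shortest_path_new_ridges (n d : ℕ) (F : Finset (Finset (Fin n)))
    (hdown : ∀ s ∈ F, ∀ t ⊆ s, t ∈ F)
    (hdim : ∀ s ∈ F, s.card ≤ d + 1)
    (hmax : ∃ s ∈ F, s.card = d + 1)
    {u v : {s : Finset (Fin n) // s ∈ F ∧ s.card = d + 1}}
    (w : (dualGraph n d F).Walk u v)
    (hshort : w.length = (dualGraph n d F).dist u v) :
    ∀ i, 1 ≤ i → i ≤ w.length →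
      d ≤ {t : Finset (Fin n) | t.card = d ∧ t ⊆ (w.getVert i).val ∧
            ∀ j < i, ¬ t ⊆ (w.getVert j).val}.ncard :=
  shortest_path_new_ridges_general n d F w hshort
end

section
/- For every ℓ ≥ 3 and n = 8ℓ+1, the sequence (3, 2, 7, 6, 11, 10, ..., 4ℓ−1, 4ℓ−2) (alternately adding 5 and subtracting 1, of length 2ℓ) has sum 4ℓ² + ℓ, which is coprime to 8ℓ+1, and the multiset {±a_i} ∪ {±(a_i + a_{i+1}) : i < 2ℓ−1} ∪ {±(a_{2ℓ−2} + a_{2ℓ−1} + a_0)} consists of 8ℓ distinct nonzero residues modulo 8ℓ+1. -/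
/-- The black sequence `(3, 2, 7, 6, 11, 10, …)` given by `b_{2j} = 4j + 3` and
`b_{2j+1} = 4j + 2`. -/
def seqB : ℕ → ℕ := fun i =>
  if i % 2 = 0 then 4 * (i / 2) + 3 else 4 * (i / 2) + 2

/-- The black sequence viewed in `ZMod (8ℓ+1)`. -/
def seqb (ℓ : ℕ) (i : ℕ) : ZMod (8 * ℓ + 1) := (seqB i : ZMod (8 * ℓ + 1))

/-- The set of covered residues for `n = 8ℓ+1`: the `±` entries `±b_i`, the
consecutive sums `±(b_i + b_{i+1})` for `i < 2ℓ−1`, and the turn residue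
`±(b_{2ℓ−2} + b_{2ℓ−1} + b_0)`. -/
def coveredResidues (ℓ : ℕ) : Finset (ZMod (8 * ℓ + 1)) :=
  ((Finset.range (2 * ℓ)).biUnion (fun i => {seqb ℓ i, -seqb ℓ i})) ∪
  ((Finset.range (2 * ℓ - 1)).biUnion
    (fun i => {seqb ℓ i + seqb ℓ (i + 1), -(seqb ℓ i + seqb ℓ (i + 1))})) ∪
  ({seqb ℓ (2 * ℓ - 2) + seqb ℓ (2 * ℓ - 1) + seqb ℓ 0,
    -(seqb ℓ (2 * ℓ - 2) + seqb ℓ (2 * ℓ - 1) + seqb ℓ 0)} :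
      Finset (ZMod (8 * ℓ + 1)))

/-!
The consecutive sums are `4i + 5`, i.e. all `k ≡ 1 (mod 4)` with `5 ≤ k ≤ 8ℓ - 3`; the entries are
all `k ≡ 2, 3 (mod 4)` below `4ℓ`; the turn is `8ℓ ≡ -1`. As `k ↦ 8ℓ + 1 - k` is negation modulo
`8ℓ + 1` and swaps the classes `0 ↔ 1` and `2 ↔ 3` mod 4, every nonzero residue is listed. At most
`8ℓ` residues are listed, so they are exactly the `8ℓ` nonzero ones: distinct and nonzero.
-/

section CoveredResidues

variable {ℓ : ℕ}

theorem seqB_add_seqB_succ (i : ℕ) : seqB i + seqB (i + 1) = 4 * i + 5 := by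
  unfold seqB; split_ifs <;> omega

theorem sum_range_seqB (ℓ : ℕ) : ∑ i ∈ Finset.range (2 * ℓ), seqB i = 4 * ℓ ^ 2 + ℓ := by
  induction ℓ with
  | zero => simp
  | succ k ih =>
    rw [show 2 * (k + 1) = 2 * k + 1 + 1 by ring, Finset.sum_range_succ, Finset.sum_range_succ,
      ih, add_assoc _ (seqB (2 * k)), seqB_add_seqB_succ]
    ring

theorem coprime_four_mul_sq_add_self (ℓ : ℕ) : Nat.Coprime (4 * ℓ ^ 2 + ℓ) (8 * ℓ + 1) := by
  rw [← Nat.isCoprime_iff_coprime]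
  -- `(8ℓ + 1)² = 16 (4ℓ² + ℓ) + 1`
  exact ⟨-16, 8 * ℓ + 1, by push_cast; ring⟩

theorem seqB_turn (hℓ : 0 < ℓ) : seqB (2 * ℓ - 2) + seqB (2 * ℓ - 1) + seqB 0 = 8 * ℓ := by
  unfold seqB; split_ifs <;> omega

theorem neg_mem_coveredResidues_iff {x : ZMod (8 * ℓ + 1)} :
    -x ∈ coveredResidues ℓ ↔ x ∈ coveredResidues ℓ := by
  simp only [coveredResidues, Finset.mem_union, Finset.mem_biUnion, Finset.mem_insert,
    Finset.mem_singleton, neg_eq_iff_eq_neg, neg_neg]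
  aesop

theorem exists_seqB_eq {k : ℕ} (hkℓ : k < 4 * ℓ) (hk4 : k % 4 = 2 ∨ k % 4 = 3) :
    ∃ i < 2 * ℓ, seqB i = k := by
  rcases hk4 with h | h
  · exact ⟨2 * (k / 4) + 1, by omega, by unfold seqB; split_ifs <;> omega⟩
  · exact ⟨2 * (k / 4), by omega, by unfold seqB; split_ifs <;> omega⟩

theorem natCast_entry_mem_coveredResidues {k : ℕ} (hkℓ : k < 4 * ℓ)
    (hk4 : k % 4 = 2 ∨ k % 4 = 3) : (k : ZMod (8 * ℓ + 1)) ∈ coveredResidues ℓ := by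
  obtain ⟨i, hi, rfl⟩ := exists_seqB_eq hkℓ hk4
  simp only [coveredResidues, Finset.mem_union, Finset.mem_biUnion, Finset.mem_range]
  exact Or.inl (Or.inl ⟨i, hi, Finset.mem_insert_self _ _⟩)

theorem natCast_consecutive_sum_mem_coveredResidues {k : ℕ} (hk : 5 ≤ k) (hkℓ : k ≤ 8 * ℓ - 3)
    (hk4 : k % 4 = 1) : (k : ZMod (8 * ℓ + 1)) ∈ coveredResidues ℓ := by
  obtain ⟨i, rfl⟩ : ∃ i, k = 4 * i + 5 := ⟨(k - 5) / 4, by omega⟩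
  simp only [coveredResidues, Finset.mem_union, Finset.mem_biUnion, Finset.mem_range]
  refine Or.inl (Or.inr ⟨i, by omega, ?_⟩)
  simp [seqb, ← Nat.cast_add, seqB_add_seqB_succ]

theorem natCast_turn_mem_coveredResidues (hℓ : 0 < ℓ) :
    ((8 * ℓ : ℕ) : ZMod (8 * ℓ + 1)) ∈ coveredResidues ℓ := by
  simp only [coveredResidues, Finset.mem_union]
  right
  simp [seqb, ← Nat.cast_add, seqB_turn hℓ]

theorem natCast_mem_coveredResidues {m : ℕ} (hm : 1 ≤ m) (hmℓ : m ≤ 8 * ℓ) :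
    (m : ZMod (8 * ℓ + 1)) ∈ coveredResidues ℓ := by
  have hℓ : 0 < ℓ := by omega
  have of_complement (h : ((8 * ℓ + 1 - m : ℕ) : ZMod (8 * ℓ + 1)) ∈ coveredResidues ℓ) :
      (m : ZMod (8 * ℓ + 1)) ∈ coveredResidues ℓ := by
    rw [Nat.cast_sub (by omega), ZMod.natCast_self, zero_sub] at h
    exact neg_mem_coveredResidues_iff.1 h
  obtain h | h | h : m % 4 = 0 ∨ m % 4 = 1 ∨ m % 4 = 2 ∨ m % 4 = 3 := by omega
  · obtain rfl | hm' := eq_or_lt_of_le hmℓ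
    · exact natCast_turn_mem_coveredResidues hℓ
    · exact of_complement (natCast_consecutive_sum_mem_coveredResidues (by omega) (by omega)
        (by omega))
  · obtain rfl | hm' := eq_or_lt_of_le hm
    · refine of_complement ?_
      rw [Nat.add_sub_cancel]
      exact natCast_turn_mem_coveredResidues hℓ
    · exact natCast_consecutive_sum_mem_coveredResidues (by omega) (by omega) h
  · rcases lt_or_ge m (4 * ℓ) with hlt | hge
    · exact natCast_entry_mem_coveredResidues hlt h
    · exact of_complement (natCast_entry_mem_coveredResidues (by omega) (by omega))

theorem univ_erase_zero_subset_coveredResidues :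
    Finset.univ.erase 0 ⊆ coveredResidues ℓ := by
  intro x hx
  have hx0 : x.val ≠ 0 := (ZMod.val_ne_zero x).2 (Finset.ne_of_mem_erase hx)
  rw [← ZMod.natCast_zmod_val x]
  exact natCast_mem_coveredResidues (by omega) (by have := ZMod.val_lt x; omega)

theorem card_coveredResidues_le (hℓ : 0 < ℓ) : (coveredResidues ℓ).card ≤ 8 * ℓ := by
  have hpair (a b : ZMod (8 * ℓ + 1)) : ({a, b} : Finset _).card ≤ 2 := Finset.card_le_two
  calc (coveredResidues ℓ).card
      ≤ (2 * ℓ) * 2 + (2 * ℓ - 1) * 2 + 2 := by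
        refine (Finset.card_union_le _ _).trans (add_le_add ((Finset.card_union_le _ _).trans
          (add_le_add ?_ ?_)) (hpair _ _))
        all_goals
          exact (Finset.card_biUnion_le_card_mul _ _ 2 fun _ _ => hpair _ _).trans_eq
            (by rw [Finset.card_range])
    _ = 8 * ℓ := by omega

theorem coveredResidues_eq_univ_erase_zero (hℓ : 0 < ℓ) :
    coveredResidues ℓ = Finset.univ.erase 0 :=
  (Finset.eq_of_subset_of_card_le univ_erase_zero_subset_coveredResidues (by
    rw [Finset.card_erase_of_mem (Finset.mem_univ _), Finset.card_univ, ZMod.card]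
    simpa using card_coveredResidues_le hℓ)).symm

end CoveredResidues

/-- For every `ℓ ≥ 3` and `n = 8ℓ+1`, the sequence `(3, 2, 7, 6, 11, 10, …,
4ℓ−1, 4ℓ−2)` of length `2ℓ` has sum `4ℓ² + ℓ`, which is coprime to `8ℓ+1`, and
the entries `±b_i`, the consecutive sums `±(b_i + b_{i+1})` for `i < 2ℓ−1` and
the turn residue `±(b_{2ℓ−2} + b_{2ℓ−1} + b_0)` form `8ℓ` distinct nonzero
residues modulo `8ℓ+1`. -/
theorem generating_sequence_case_even (ℓ : ℕ) (hℓ : 3 ≤ ℓ) :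
    (∑ i ∈ Finset.range (2 * ℓ), seqB i) = 4 * ℓ ^ 2 + ℓ ∧
    Nat.Coprime (4 * ℓ ^ 2 + ℓ) (8 * ℓ + 1) ∧
    (coveredResidues ℓ).card = 8 * ℓ ∧
    (0 : ZMod (8 * ℓ + 1)) ∉ coveredResidues ℓ := by
  have hcov := coveredResidues_eq_univ_erase_zero (by omega : 0 < ℓ)
  refine ⟨sum_range_seqB ℓ, coprime_four_mul_sq_add_self ℓ, ?_, by simp [hcov]⟩
  rw [hcov, Finset.card_erase_of_mem (Finset.mem_univ _), Finset.card_univ, ZMod.card]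
  simp
end
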